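/- arXiv:2501.14341 — 8 statements merged into one kernel-verified Lean document; each statement's English description precedes it below -/
import Mathlib

section
/- If B is a minimal balanced collection on N with balancing weights (λ_S), then the collection of complements {N\S : S ∈ B} is also a balanced collection, with balancing weights λ'_{N\S} = λ_S / (Σ_{T∈B} λ_T − 1). -/
open Finset

def IsBalancedCollection {n : ℕ} (B : Finset (Finset (Fin n)))
    (w : Finset (Fin n) → ℝ) : Prop :=
  (∀ S ∈ B, S.Nonempty) ∧ (∀ S ∈ B, 0 < w S) ∧
    ∀ i : Fin n, ∑ S ∈ B.filter (fun S => i ∈ S), w S = 1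

def IsMinimalBalanced {n : ℕ} (B : Finset (Finset (Fin n)))
    (w : Finset (Fin n) → ℝ) : Prop :=
  IsBalancedCollection B w ∧ ∀ B' ⊂ B, ∀ w', ¬ IsBalancedCollection B' w'

lemma compl_inj {n : ℕ} : Function.Injective (fun S : Finset (Fin n) => Finset.univ \ S) := by
  intro S T h
  have hS : Finset.univ \ (Finset.univ \ S) = S := by
    simp [Finset.sdiff_sdiff_self_left]
  have hT : Finset.univ \ (Finset.univ \ T) = T := by
    simp [Finset.sdiff_sdiff_self_left]
  rw [← hS, ← hT]; simp only at h; rw [h]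

/-- If `B` is a minimal balanced collection on `N` (≠ {N}) with balancing weights `w`,
then the collection of complements is balanced with weights
`w' (N \ S) = w S / (∑_{T ∈ B} w T - 1)`. -/
theorem complements_of_minimal_balanced {n : ℕ} (hn : 2 ≤ n)
    (B : Finset (Finset (Fin n))) (w : Finset (Fin n) → ℝ)
    (hB : IsMinimalBalanced B w) (hBne : B ≠ {Finset.univ}) :
    IsBalancedCollection (B.image (fun S => Finset.univ \ S))
      (fun S => w (Finset.univ \ S) / (∑ T ∈ B, w T - 1)) := by
  obtain ⟨⟨hne, hpos, hbal⟩, hmin⟩ := hB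
  haveI : Nonempty (Fin n) := ⟨⟨0, by omega⟩⟩
  -- univ ∉ B
  have huniv : Finset.univ ∉ B := by
    intro hu
    have hsub : ({Finset.univ} : Finset (Finset (Fin n))) ⊂ B := by
      refine Finset.ssubset_iff_subset_ne.mpr ⟨Finset.singleton_subset_iff.mpr hu, ?_⟩
      exact fun h => hBne h.symm
    exact hmin _ hsub (fun _ => 1)
      ⟨fun S hS => by
          simp only [Finset.mem_singleton] at hS
          subst hS
          exact Finset.univ_nonempty,
       fun S _ => one_pos,
       fun i => by simp [Finset.filter_singleton]⟩
  have hnotuniv : ∀ S ∈ B, S ≠ Finset.univ := fun S hS h => huniv (h ▸ hS)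
  -- sum of weights > 1
  have hsum : (1 : ℝ) < ∑ T ∈ B, w T := by
    have hcount : (n : ℝ) = ∑ S ∈ B, (S.card : ℝ) * w S := by
      calc (n : ℝ) = ∑ i : Fin n, (1 : ℝ) := by simp
        _ = ∑ i : Fin n, ∑ S ∈ B.filter (fun S => i ∈ S), w S := by
            exact Finset.sum_congr rfl fun i _ => (hbal i).symm
        _ = ∑ i : Fin n, ∑ S ∈ B, if i ∈ S then w S else 0 := by
            exact Finset.sum_congr rfl fun i _ => (Finset.sum_filter _ _)
        _ = ∑ S ∈ B, ∑ i : Fin n, if i ∈ S then w S else 0 := Finset.sum_comm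
        _ = ∑ S ∈ B, (S.card : ℝ) * w S := by
            refine Finset.sum_congr rfl fun S _ => ?_
            rw [Finset.sum_ite_mem, Finset.univ_inter, Finset.sum_const, nsmul_eq_mul]
    have hle : ∀ S ∈ B, (S.card : ℝ) * w S ≤ ((n : ℝ) - 1) * w S := by
      intro S hS
      have hc : S.card < n := by
        have := Finset.card_lt_card (Finset.lt_iff_ssubset.mp
          (lt_of_le_of_ne (Finset.subset_univ S) (hnotuniv S hS)))
        simpa using this
      have : (S.card : ℝ) ≤ (n : ℝ) - 1 := by
        have : (S.card : ℝ) + 1 ≤ n := by exact_mod_cast hc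
        linarith
      exact mul_le_mul_of_nonneg_right this (le_of_lt (hpos S hS))
    have h2 : (n : ℝ) ≤ ((n : ℝ) - 1) * ∑ T ∈ B, w T := by
      calc (n : ℝ) = ∑ S ∈ B, (S.card : ℝ) * w S := hcount
        _ ≤ ∑ S ∈ B, ((n : ℝ) - 1) * w S := Finset.sum_le_sum hle
        _ = ((n : ℝ) - 1) * ∑ T ∈ B, w T := (Finset.mul_sum _ _ _).symm
    have hn1 : (1 : ℝ) ≤ (n : ℝ) - 1 := by
      have : (2 : ℝ) ≤ n := by exact_mod_cast hn
      linarith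
    nlinarith
  have hD : (0 : ℝ) < ∑ T ∈ B, w T - 1 := by linarith
  have hself : ∀ S : Finset (Fin n), Finset.univ \ (Finset.univ \ S) = S := by
    intro S; simp [Finset.sdiff_sdiff_self_left]
  refine ⟨?_, ?_, ?_⟩
  · intro C hC
    obtain ⟨S, hS, rfl⟩ := Finset.mem_image.mp hC
    rw [Finset.sdiff_nonempty]
    intro h
    exact hnotuniv S hS (Finset.eq_univ_iff_forall.mpr fun i => h (Finset.mem_univ i))
  · intro C hC
    obtain ⟨S, hS, rfl⟩ := Finset.mem_image.mp hC
    exact div_pos (by rw [hself S]; exact hpos S hS) hD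
  · intro i
    rw [Finset.filter_image]
    rw [Finset.sum_image (fun a _ b _ h => compl_inj h)]
    have : ∑ S ∈ B.filter (fun S => i ∈ Finset.univ \ S),
        w (Finset.univ \ (Finset.univ \ S)) / (∑ T ∈ B, w T - 1)
        = (∑ S ∈ B.filter (fun S => i ∉ S), w S) / (∑ T ∈ B, w T - 1) := by
      rw [Finset.sum_div]
      refine Finset.sum_congr ?_ fun S _ => by rw [hself S]
      refine Finset.filter_congr fun S _ => ?_
      simp
    rw [this]
    have hsplit : ∑ S ∈ B.filter (fun S => i ∉ S), w S = ∑ T ∈ B, w T - 1 := by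
      have := Finset.sum_filter_add_sum_filter_not B (fun S => i ∈ S) w
      rw [hbal i] at this
      linarith
    rw [hsplit, div_self (ne_of_gt hD)]
end

section
/- A game v belongs to the core-nonemptiness set, i.e., C(v) ≠ ∅, if and only if v is balanced (Bondareva–Shapley). In particular, the game v lies in BG(n) iff there exists x ∈ ℝ^N with x(N) = v(N) and x(S) ≥ v(S) for all S ⊆ N. -/
open Finset

def core {n : ℕ} (v : Finset (Fin n) → ℝ) : Set (Fin n → ℝ) :=
  {x | (∀ S : Finset (Fin n), v S ≤ ∑ i ∈ S, x i) ∧ ∑ i, x i = v Finset.univ}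

/-!
Necessity: pairing the core inequalities `x(S) ≥ v(S)` with balancing weights gives
`∑ λ_S v(S) ≤ x(N) = v(N)`.

Sufficiency: if `(B', w')` is balanced with `B' ⊂ B`, removing the largest multiple `t • w'` that
fits under `w` leaves `1 - t` times a balanced collection on a proper subfamily of `B`; by induction
on `B`, the inequality for minimal collections gives it for all balanced collections. Then, for
`ε > 0`, no convex combination of the points `(1_S, v(S))`, `S ≠ ∅`, lies on the line through
`(1_N, v(N) + ε)`, since after rescaling it would be a balanced collection of value `v(N) + ε`.
Separating their compact convex hull from that line yields `x` with `x(S) > v(S)` and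
`x(N) = v(N) + ε`. These relaxed cores are compact and shrink to the core as `ε → 0`.
-/

theorem Finset.sum_filter_pos_mul {ι : Type*} (s : Finset ι) {c : ι → ℝ} (hc : ∀ i ∈ s, 0 ≤ c i)
    (f : ι → ℝ) : ∑ i ∈ s.filter (0 < c ·), c i * f i = ∑ i ∈ s, c i * f i :=
  sum_filter_of_ne fun i hi hne => (hc i hi).lt_of_ne' (left_ne_zero_of_mul hne)

theorem exists_dual_pos_of_forall_sum_notMem {ι E : Type*} [TopologicalSpace E]
    [AddCommGroup E] [IsTopologicalAddGroup E] [Module ℝ E] [ContinuousSMul ℝ E]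
    [LocallyConvexSpace ℝ E] (s : Finset ι) (p : ι → E) (W : Submodule ℝ E)
    (hW : IsClosed (W : Set E))
    (h : ∀ μ : ι → ℝ, (∀ i, 0 ≤ μ i) → ∑ i ∈ s, μ i = 1 → ∑ i ∈ s, μ i • p i ∉ W) :
    ∃ f : StrongDual ℝ E, (∀ i ∈ s, 0 < f (p i)) ∧ ∀ w ∈ W, f w = 0 := by
  classical
  set L := Fintype.linearCombination ℝ fun i : s => p i
  have hdisj : Disjoint (L '' stdSimplex ℝ s) W := by
    rw [Set.disjoint_left]
    rintro _ ⟨ν, hν, rfl⟩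
    have := h (fun i => if hi : i ∈ s then ν ⟨i, hi⟩ else 0)
      (fun i => by split_ifs <;> simp [hν.1]) (by simpa [← sum_coe_sort s] using hν.2)
    simpa [L, ← sum_coe_sort s, Fintype.linearCombination_apply] using this
  obtain ⟨f, a, b, hfa, hab, hfb⟩ := geometric_hahn_banach_compact_closed
    ((convex_stdSimplex ℝ s).linear_image L)
    ((isCompact_stdSimplex ℝ s).image L.continuous_on_pi) W.convex hW hdisj
  have hf0 : ∀ w ∈ W, f w = 0 := by
    intro w hw
    by_contra hfw
    have := hfb ((b / f w) • w) (W.smul_mem _ hw)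
    rw [map_smul, smul_eq_mul, div_mul_cancel₀ _ hfw] at this
    exact lt_irrefl _ this
  have hb : b < 0 := by simpa using hfb 0 W.zero_mem
  refine ⟨-f, fun i hi => ?_, fun w hw => by simp [hf0 w hw]⟩
  have := hfa (p i) ⟨Pi.single ⟨i, hi⟩ 1, single_mem_stdSimplex ℝ _,
    by simp [L, Fintype.linearCombination_apply, Pi.single_apply]⟩
  rw [neg_apply]
  linarith

theorem LinearMap.exists_apply_eq_sum_mul_add_mul {ι : Type*} [Fintype ι] [DecidableEq ι]
    (f : ((ι → ℝ) × ℝ) →ₗ[ℝ] ℝ) :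
    ∃ (a : ι → ℝ) (β : ℝ), ∀ y r, f (y, r) = ∑ i, y i * a i + r * β := by
  refine ⟨fun i => f (Pi.single i 1, 0), f (0, 1), fun y r => ?_⟩
  have hsplit : (y, r) = ∑ i, y i • ((Pi.single i 1 : ι → ℝ), (0 : ℝ)) + r • (0, 1) := by
    ext <;> simp [Prod.fst_sum, Prod.snd_sum, Pi.single_apply]
  simp_rw [hsplit, map_add, map_sum, map_smul, smul_eq_mul]

section Balanced

variable {n : ℕ}

theorem sum_filter_mem_eq_sum_mul_ite (B : Finset (Finset (Fin n))) (w : Finset (Fin n) → ℝ)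
    (i : Fin n) :
    ∑ S ∈ B.filter (i ∈ ·), w S = ∑ S ∈ B, w S * if i ∈ S then 1 else 0 := by
  simp [sum_filter]

namespace IsBalancedCollection

variable {B : Finset (Finset (Fin n))} {w : Finset (Fin n) → ℝ}

theorem sum_mul_ite (h : IsBalancedCollection B w) (i : Fin n) :
    ∑ S ∈ B, w S * (if i ∈ S then 1 else 0) = 1 := by
  rw [← sum_filter_mem_eq_sum_mul_ite, h.2.2 i]

theorem sum_mul_sum_eq (h : IsBalancedCollection B w) (x : Fin n → ℝ) :
    ∑ S ∈ B, w S * ∑ i ∈ S, x i = ∑ i, x i :=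
  calc ∑ S ∈ B, w S * ∑ i ∈ S, x i
      = ∑ S ∈ B, ∑ i, x i * (w S * if i ∈ S then 1 else 0) :=
        sum_congr rfl fun S _ => by simp [mul_sum, mul_comm]
    _ = ∑ i, x i := by simp_rw [sum_comm (s := B), ← mul_sum, h.sum_mul_ite, mul_one]

theorem weight_univ_of_singleton (h : IsBalancedCollection {univ} w) : w univ = 1 := by
  obtain ⟨i, -⟩ := h.1 univ (mem_singleton_self _)
  simpa using h.sum_mul_ite i

variable {B' : Finset (Finset (Fin n))} {w' : Finset (Fin n) → ℝ}

-- `t` is the least ratio `w S / w' S` over `B'`; a set `S₀ ∈ B \ B'` forces `t ≤ 1 - w S₀`.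
theorem exists_ratio_lt_one (h : IsBalancedCollection B w) (h' : IsBalancedCollection B' w')
    (hB' : B' ⊂ B) :
    ∃ t, 0 < t ∧ t < 1 ∧ (∀ S ∈ B', t * w' S ≤ w S) ∧ ∃ S₁ ∈ B', t * w' S₁ = w S₁ := by
  obtain ⟨S₀, hS₀B, hS₀B'⟩ := exists_of_ssubset hB'
  obtain ⟨i₀, hi₀⟩ := h.1 S₀ hS₀B
  have hne : B'.Nonempty := by
    rw [nonempty_iff_ne_empty]
    rintro rfl
    simpa using h'.2.2 i₀
  obtain ⟨S₁, hS₁, hmin⟩ := exists_min_image B' (fun S => w S / w' S) hne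
  have hle : ∀ S ∈ B', w S₁ / w' S₁ * w' S ≤ w S := fun S hS =>
    (le_div_iff₀ (h'.2.1 S hS)).1 (hmin S hS)
  refine ⟨w S₁ / w' S₁, div_pos (h.2.1 S₁ (hB'.subset hS₁)) (h'.2.1 S₁ hS₁), ?_, hle, S₁, hS₁,
    div_mul_cancel₀ _ (h'.2.1 S₁ hS₁).ne'⟩
  have hsub : B'.filter (i₀ ∈ ·) ⊆ (B.filter (i₀ ∈ ·)).erase S₀ := fun S hS => by
    simp only [mem_filter, mem_erase] at hS ⊢
    exact ⟨fun h => hS₀B' (h ▸ hS.1), hB'.subset hS.1, hS.2⟩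
  have hS₀ : S₀ ∈ B.filter (i₀ ∈ ·) := mem_filter.2 ⟨hS₀B, hi₀⟩
  calc w S₁ / w' S₁
      = ∑ S ∈ B'.filter (i₀ ∈ ·), w S₁ / w' S₁ * w' S := by
        rw [← mul_sum, h'.2.2, mul_one]
    _ ≤ ∑ S ∈ (B.filter (i₀ ∈ ·)).erase S₀, w S := by
        refine (sum_le_sum fun S hS => hle S (mem_filter.1 hS).1).trans ?_
        exact sum_le_sum_of_subset_of_nonneg hsub fun S hS _ =>
          (h.2.1 S (mem_filter.1 (mem_of_mem_erase hS)).1).le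
    _ = 1 - w S₀ := by rw [← h.2.2 i₀, ← add_sum_erase _ _ hS₀, add_sub_cancel_left]
    _ < 1 := sub_lt_self _ (h.2.1 S₀ hS₀B)

theorem exists_decomposition (h : IsBalancedCollection B w) (h' : IsBalancedCollection B' w')
    (hB' : B' ⊂ B) :
    ∃ t, 0 < t ∧ t < 1 ∧ ∃ B'' ⊂ B, ∃ u, IsBalancedCollection B'' u ∧
      ∀ f : Finset (Fin n) → ℝ,
        ∑ S ∈ B, w S * f S = t * ∑ S ∈ B', w' S * f S + (1 - t) * ∑ S ∈ B'', u S * f S := by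
  obtain ⟨t, ht0, ht1, hle, S₁, hS₁, hS₁eq⟩ := h.exists_ratio_lt_one h' hB'
  have h1t : (1 - t) ≠ 0 := (sub_pos.2 ht1).ne'
  set u : Finset (Fin n) → ℝ := fun S => (w S - t * if S ∈ B' then w' S else 0) / (1 - t)
  have hu0 : ∀ S ∈ B, 0 ≤ u S := fun S hS => by
    refine div_nonneg ?_ (sub_pos.2 ht1).le
    split_ifs with hS'
    · linarith [hle S hS']
    · linarith [h.2.1 S hS]
  have hsum : ∀ f : Finset (Fin n) → ℝ,
      ∑ S ∈ B, w S * f S =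
        t * ∑ S ∈ B', w' S * f S + (1 - t) * ∑ S ∈ B.filter (0 < u ·), u S * f S := by
    intro f
    have hB'sum : ∑ S ∈ B', w' S * f S = ∑ S ∈ B, (if S ∈ B' then w' S else 0) * f S := by
      simp_rw [ite_mul, zero_mul, ← sum_filter, filter_mem_eq_inter,
        inter_eq_right.2 hB'.subset]
    rw [hB'sum, sum_filter_pos_mul _ hu0, mul_sum, mul_sum, ← sum_add_distrib]
    refine sum_congr rfl fun S _ => ?_
    simp only [u]
    field_simp
    ring
  refine ⟨t, ht0, ht1, B.filter (0 < u ·), ?_, u, ⟨fun S hS => h.1 S (mem_filter.1 hS).1,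
    fun S hS => (mem_filter.1 hS).2, fun i => ?_⟩, hsum⟩
  · refine filter_ssubset.2 ⟨S₁, hB'.subset hS₁, ?_⟩
    simp [u, hS₁, hS₁eq]
  · have := hsum fun S => if i ∈ S then 1 else 0
    rw [h.sum_mul_ite, h'.sum_mul_ite, ← sum_filter_mem_eq_sum_mul_ite] at this
    exact mul_left_cancel₀ h1t (by linarith)

end IsBalancedCollection

def IsBalancedGame (v : Finset (Fin n) → ℝ) : Prop :=
  ∀ (B : Finset (Finset (Fin n))) (w : Finset (Fin n) → ℝ),
    IsBalancedCollection B w → ∑ S ∈ B, w S * v S ≤ v univ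

theorem isBalancedGame_of_isMinimalBalanced {v : Finset (Fin n) → ℝ}
    (H : ∀ (B : Finset (Finset (Fin n))) (w : Finset (Fin n) → ℝ),
      IsMinimalBalanced B w → B ≠ {univ} → ∑ S ∈ B, w S * v S ≤ v univ) :
    IsBalancedGame v := by
  intro B w h
  induction B using strongInduction generalizing w with
  | H B ih =>
  by_cases hN : B = {univ}
  · subst hN
    simp [h.weight_univ_of_singleton]
  by_cases hmin : IsMinimalBalanced B w
  · exact H B w hmin hN
  obtain ⟨B', hB', w', h'⟩ : ∃ B' ⊂ B, ∃ w', IsBalancedCollection B' w' := by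
    simpa [IsMinimalBalanced, h] using hmin
  obtain ⟨t, ht0, ht1, B'', hB'', u, hu, hsum⟩ := h.exists_decomposition h' hB'
  have h₁ := ih B' hB' w' h'
  have h₂ := ih B'' hB'' u hu
  rw [hsum]
  nlinarith

theorem isBalancedGame_of_mem_core {v : Finset (Fin n) → ℝ} {x : Fin n → ℝ} (hx : x ∈ core v) :
    IsBalancedGame v := fun B w h =>
  calc ∑ S ∈ B, w S * v S
      ≤ ∑ S ∈ B, w S * ∑ i ∈ S, x i :=
        sum_le_sum fun S hS => mul_le_mul_of_nonneg_left (hx.1 S) (h.2.1 S hS).le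
    _ = v univ := by rw [h.sum_mul_sum_eq, hx.2]

theorem isBalancedCollection_filter_pos {s : Finset (Finset (Fin n))}
    (hs : ∀ S ∈ s, S.Nonempty) {c : Finset (Fin n) → ℝ} (hc : ∀ S ∈ s, 0 ≤ c S)
    (hbal : ∀ i, ∑ S ∈ s, c S * (if i ∈ S then 1 else 0) = 1) :
    IsBalancedCollection (s.filter (0 < c ·)) c := by
  refine ⟨fun S hS => hs S (mem_filter.1 hS).1, fun S hS => (mem_filter.1 hS).2, fun i => ?_⟩
  rw [sum_filter_mem_eq_sum_mul_ite, sum_filter_pos_mul _ hc, hbal]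

section RelaxedCore

def relaxedCore (v : Finset (Fin n) → ℝ) (ε : ℝ) : Set (Fin n → ℝ) :=
  {x | (∀ S : Finset (Fin n), v S ≤ ∑ i ∈ S, x i) ∧ ∑ i, x i ≤ v univ + ε}

variable (v : Finset (Fin n) → ℝ)

theorem relaxedCore_mono {ε δ : ℝ} (hεδ : ε ≤ δ) : relaxedCore v ε ⊆ relaxedCore v δ :=
  fun _ hx => ⟨hx.1, hx.2.trans (by linarith)⟩

theorem isClosed_relaxedCore (ε : ℝ) : IsClosed (relaxedCore v ε) := by
  simp only [relaxedCore, Set.ofPred_and, Set.ofPred_forall]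
  exact (isClosed_iInter fun S => isClosed_le continuous_const (by fun_prop)).inter
    (isClosed_le (by fun_prop) continuous_const)

theorem relaxedCore_subset_pi (ε : ℝ) :
    relaxedCore v ε ⊆
      Set.univ.pi fun i => Set.Icc (v {i}) (v univ + ε - v (univ.erase i)) := by
  rintro x ⟨hS, hN⟩ i -
  have hi := hS {i}
  have hrest := hS (univ.erase i)
  rw [sum_singleton] at hi
  rw [← add_sum_erase _ _ (mem_univ i)] at hN
  exact ⟨hi, by linarith⟩

theorem isCompact_relaxedCore (ε : ℝ) : IsCompact (relaxedCore v ε) :=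
  (isCompact_univ_pi fun _ => isCompact_Icc).of_isClosed_subset (isClosed_relaxedCore v ε)
    (relaxedCore_subset_pi v ε)

theorem core_nonempty_of_forall_relaxedCore_nonempty
    (h : ∀ ε > 0, (relaxedCore v ε).Nonempty) : (core v).Nonempty := by
  obtain ⟨x, hx⟩ := IsCompact.nonempty_iInter_of_directed_nonempty_isCompact_isClosed
    (fun ε : {ε : ℝ // 0 < ε} => relaxedCore v ε)
    (fun ε δ => ⟨⟨min ε δ, lt_min ε.2 δ.2⟩, relaxedCore_mono v (min_le_left _ _),
      relaxedCore_mono v (min_le_right _ _)⟩)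
    (fun ε => h ε ε.2) (fun ε => isCompact_relaxedCore v ε)
    (fun ε => isClosed_relaxedCore v ε)
  rw [Set.mem_iInter] at hx
  refine ⟨x, (hx ⟨1, one_pos⟩).1, le_antisymm ?_ (by simpa using (hx ⟨1, one_pos⟩).1 univ)⟩
  exact le_of_forall_pos_le_add fun ε hε => (hx ⟨ε, hε⟩).2

end RelaxedCore

def coalitionVector (v : Finset (Fin n) → ℝ) (S : Finset (Fin n)) : (Fin n → ℝ) × ℝ :=
  (fun i => if i ∈ S then 1 else 0, v S)

theorem sum_smul_coalitionVector_notMem_span {v : Finset (Fin n) → ℝ}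
    (hv : IsBalancedGame v) {ε : ℝ} (hε : 0 < ε) {μ : Finset (Fin n) → ℝ} (hμ : ∀ S, 0 ≤ μ S)
    (hμ1 : ∑ S ∈ univ.filter Finset.Nonempty, μ S = 1) :
    ∑ S ∈ univ.filter Finset.Nonempty, μ S • coalitionVector v S ∉
      ℝ ∙ ((fun _ => 1, v univ + ε) : (Fin n → ℝ) × ℝ) := by
  set s : Finset (Finset (Fin n)) := univ.filter Finset.Nonempty
  intro hμz
  obtain ⟨t, ht⟩ := Submodule.mem_span_singleton.1 hμz
  have hcoord : ∀ i, ∑ S ∈ s, μ S * (if i ∈ S then 1 else 0) = t := fun i => by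
    simpa [coalitionVector, Prod.fst_sum, Finset.sum_apply] using
      (congr_fun (congr_arg Prod.fst ht) i).symm
  have hval : ∑ S ∈ s, μ S * v S = t * (v univ + ε) := by
    simpa [coalitionVector, Prod.snd_sum] using (congr_arg Prod.snd ht).symm
  obtain ⟨S, hS, hμS⟩ := exists_lt_of_sum_lt (s := s) (f := 0) (g := μ) (by simp [hμ1])
  obtain ⟨i, hi⟩ : S.Nonempty := by simpa [s] using hS
  have ht : 0 < t :=
    calc 0 < μ S * (if i ∈ S then 1 else 0) := by simpa [hi] using hμS
      _ ≤ ∑ S ∈ s, μ S * (if i ∈ S then 1 else 0) :=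
        single_le_sum (f := fun S => μ S * if i ∈ S then 1 else 0)
          (fun S _ => mul_nonneg (hμ S) (by split_ifs <;> norm_num)) hS
      _ = t := hcoord i
  have hc : ∀ S ∈ s, 0 ≤ μ S / t := fun S _ => div_nonneg (hμ S) ht.le
  have hbal := isBalancedCollection_filter_pos (fun S hS => by simpa [s] using hS) hc
    fun i => by simp_rw [div_mul_eq_mul_div, ← sum_div, hcoord, div_self ht.ne']
  have := hv _ _ hbal
  simp_rw [sum_filter_pos_mul _ hc, div_mul_eq_mul_div, ← sum_div, hval,
    mul_div_cancel_left₀ _ ht.ne'] at this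
  linarith

theorem IsBalancedGame.relaxedCore_nonempty {v : Finset (Fin n) → ℝ} (hv : IsBalancedGame v)
    (h0 : v ∅ = 0) {ε : ℝ} (hε : 0 < ε) : (relaxedCore v ε).Nonempty := by
  rcases isEmpty_or_nonempty (Fin n) with hn | hn
  · refine ⟨0, fun S => ?_, ?_⟩ <;> simp [Subsingleton.elim _ (∅ : Finset (Fin n)), h0, hε.le]
  obtain ⟨f, hfp, hfz⟩ := exists_dual_pos_of_forall_sum_notMem (univ.filter Finset.Nonempty)
    (coalitionVector v) _ (Submodule.closed_of_finiteDimensional _)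
    fun μ hμ hμ1 => sum_smul_coalitionVector_notMem_span hv hε hμ hμ1
  obtain ⟨a, β, hf⟩ := f.toLinearMap.exists_apply_eq_sum_mul_add_mul
  simp only [ContinuousLinearMap.coe_coe] at hf
  have hfS : ∀ S, S.Nonempty → 0 < ∑ i ∈ S, a i + v S * β := fun S hS => by
    simpa [coalitionVector, hf, ite_mul, sum_ite_mem] using hfp S (by simpa using hS)
  have hfN : ∑ i, a i + (v univ + ε) * β = 0 := by
    simpa [hf] using hfz _ (Submodule.mem_span_singleton_self _)
  have hβ : β < 0 := by nlinarith [hfS univ univ_nonempty]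
  refine ⟨fun i => a i / -β, fun S => ?_, ?_⟩
  · rcases S.eq_empty_or_nonempty with rfl | hS
    · simp [h0]
    · rw [← sum_div, le_div_iff₀ (neg_pos.2 hβ)]
      linarith [hfS S hS]
  · rw [← sum_div, div_le_iff₀ (neg_pos.2 hβ)]
    linarith

end Balanced

/-- Bondareva–Shapley: the core of `v` is nonempty iff `v` is balanced, i.e. iff
`∑_{S ∈ B} λ_S v(S) ≤ v(N)` for all minimal balanced collections `B ≠ {N}`. -/
theorem bondareva_shapley {n : ℕ} (v : Finset (Fin n) → ℝ) (h0 : v ∅ = 0) :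
    (core v).Nonempty ↔
      ∀ (B : Finset (Finset (Fin n))) (w : Finset (Fin n) → ℝ),
        IsMinimalBalanced B w → B ≠ {Finset.univ} →
          ∑ S ∈ B, w S * v S ≤ v Finset.univ := by
  constructor
  · rintro ⟨x, hx⟩ B w hB -
    exact isBalancedGame_of_mem_core hx B w hB.1
  · intro H
    exact core_nonempty_of_forall_relaxedCore_nonempty v fun ε hε =>
      (isBalancedGame_of_isMinimalBalanced H).relaxedCore_nonempty h0 hε
end

section
/- A game v ∈ G_+(n) (nonnegative, v(N)=1) is an extreme point of the convex set BG_+(n) if and only if v has nonempty core and v takes only values 0 and 1. -/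
open Finset

def BGplus (n : ℕ) : Set (Finset (Fin n) → ℝ) :=
  {v | v ∅ = 0 ∧ (∀ S, 0 ≤ v S) ∧ v Finset.univ = 1 ∧ (core v).Nonempty}

/-- Auxiliary: perturbing a balanced game along a direction `d` (supported on coordinates
where the core element `x` is positive, with zero total sum) on the tight sets keeps it
in `BGplus`. -/
lemma perturb_mem {n : ℕ} (v : Finset (Fin n) → ℝ) (h0 : v ∅ = 0) (hpos : ∀ S, 0 ≤ v S)
    (hN : v Finset.univ = 1) (x : Fin n → ℝ)
    (hx1 : ∀ S, v S ≤ ∑ i ∈ S, x i) (hx2 : ∑ i, x i = v Finset.univ)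
    (d : Fin n → ℝ) (t : ℝ) (ht : 0 < t)
    (hDuniv : ∑ i, d i = 0)
    (hD1 : ∀ S : Finset (Fin n), -1 ≤ ∑ i ∈ S, d i)
    (hD0 : ∀ S : Finset (Fin n), ∑ i ∈ S, x i = v S → v S = 0 → ∑ i ∈ S, d i = 0)
    (ht1 : ∀ S : Finset (Fin n), ∑ i ∈ S, x i = v S → v S ≠ 0 → t ≤ v S)
    (ht2 : ∀ S : Finset (Fin n), ∑ i ∈ S, x i ≠ v S → t ≤ ∑ i ∈ S, x i - v S) :
    (fun S => v S + if ∑ i ∈ S, x i = v S then t * ∑ i ∈ S, d i else 0) ∈ BGplus n := by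
  have hsum : ∀ S : Finset (Fin n), ∑ i ∈ S, (x i + t * d i)
      = (∑ i ∈ S, x i) + t * ∑ i ∈ S, d i := by
    intro S
    rw [Finset.sum_add_distrib, Finset.mul_sum]
  refine ⟨?_, ?_, ?_, ⟨fun i => x i + t * d i, ?_, ?_⟩⟩
  · simp [h0]
  · intro S
    dsimp only
    by_cases hc : ∑ i ∈ S, x i = v S
    · by_cases hz : v S = 0
      · simp [hc, hz, hD0 S hc hz]
      · have h1 := ht1 S hc hz
        have h2 : t * (-1) ≤ t * ∑ i ∈ S, d i :=
          mul_le_mul_of_nonneg_left (hD1 S) ht.le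
        simp only [hc, if_true]
        nlinarith
    · simp only [hc, if_false]
      simpa using hpos S
  · dsimp only
    rw [if_pos hx2]
    have : ∑ i, d i = 0 := hDuniv
    rw [this, mul_zero, add_zero, hN]
  · intro S
    dsimp only
    rw [hsum S]
    by_cases hc : ∑ i ∈ S, x i = v S
    · rw [if_pos hc, hc]
    · rw [if_neg hc]
      have h1 := ht2 S hc
      have h2 : t * (-1) ≤ t * ∑ i ∈ S, d i :=
        mul_le_mul_of_nonneg_left (hD1 S) ht.le
      nlinarith
  · dsimp only
    rw [if_pos hx2, hsum, hDuniv]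
    simp only [mul_zero, add_zero]
    exact hx2

/-- A game `v ∈ G_+(n)` is an extreme point of `BG_+(n)` iff it has a nonempty core
and is 0-1-valued. -/
theorem vertex_BGplus_iff {n : ℕ} (v : Finset (Fin n) → ℝ)
    (h0 : v ∅ = 0) (hpos : ∀ S, 0 ≤ v S) (hN : v Finset.univ = 1) :
    (v ∈ BGplus n ∧
      ¬ ∃ v' v'', v' ∈ BGplus n ∧ v'' ∈ BGplus n ∧ v' ≠ v'' ∧
        v = (1 / 2 : ℝ) • (v' + v'')) ↔
    ((core v).Nonempty ∧ ∀ S, v S = 0 ∨ v S = 1) := by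
  constructor
  · rintro ⟨hmem, hext⟩
    obtain ⟨-, -, -, hcore⟩ := hmem
    refine ⟨hcore, ?_⟩
    intro S₀
    by_contra hS₀
    push_neg at hS₀
    obtain ⟨hne0, hne1⟩ := hS₀
    apply hext
    obtain ⟨x, hx1, hx2⟩ := hcore
    have hxnn : ∀ i, 0 ≤ x i := fun i => le_trans (hpos {i}) (by simpa using hx1 {i})
    have hα0 : 0 < v S₀ := (hpos S₀).lt_of_ne (Ne.symm hne0)
    have hxS0 := hx1 S₀
    have hsumle : ∀ S : Finset (Fin n), ∑ i ∈ S, x i ≤ 1 := by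
      intro S
      calc ∑ i ∈ S, x i ≤ ∑ i, x i :=
            Finset.sum_le_sum_of_subset_of_nonneg (Finset.subset_univ S)
              (fun i _ _ => hxnn i)
        _ = 1 := by rw [hx2, hN]
    rcases lt_or_eq_of_le hxS0 with hlt | heq
    · -- easy case : some core element gives slack at S₀
      set ε := min (v S₀) (∑ i ∈ S₀, x i - v S₀) with hε_def
      have hε : 0 < ε := lt_min hα0 (by linarith)
      have hεα : ε ≤ v S₀ := min_le_left _ _
      have hεs : ε ≤ ∑ i ∈ S₀, x i - v S₀ := min_le_right _ _
      have hS₀ne : S₀ ≠ ∅ := fun h => hne0 (h ▸ h0)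
      have hS₀nu : S₀ ≠ Finset.univ := fun h => hne1 (h ▸ hN)
      refine ⟨fun S => if S = S₀ then v S + ε else v S,
              fun S => if S = S₀ then v S - ε else v S,
              ⟨?_, ?_, ?_, ⟨x, ?_, ?_⟩⟩, ⟨?_, ?_, ?_, ⟨x, ?_, ?_⟩⟩, ?_, ?_⟩
      · dsimp only; rw [if_neg (Ne.symm hS₀ne)]; exact h0
      · intro S
        dsimp only
        split_ifs with h
        · have := hpos S; linarith
        · exact hpos S
      · dsimp only; rw [if_neg (Ne.symm hS₀nu)]; exact hN
      · intro S
        dsimp only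
        split_ifs with h
        · subst h; linarith
        · exact hx1 S
      · simp only [if_neg (Ne.symm hS₀nu)]; exact hx2
      · dsimp only; rw [if_neg (Ne.symm hS₀ne)]; exact h0
      · intro S
        dsimp only
        split_ifs with h
        · subst h; linarith
        · exact hpos S
      · dsimp only; rw [if_neg (Ne.symm hS₀nu)]; exact hN
      · intro S
        dsimp only
        split_ifs with h
        · subst h; linarith [hx1 S]
        · exact hx1 S
      · simp only [if_neg (Ne.symm hS₀nu)]; exact hx2
      · intro hcontra
        have h := congrFun hcontra S₀
        rw [if_pos rfl, if_pos rfl] at h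
        linarith
      · funext S
        simp only [Pi.smul_apply, Pi.add_apply, smul_eq_mul]
        split_ifs with h <;> ring
    · -- TIGHT case : every core element is tight at S₀ ; move mass inside S₀
      have hα1 : v S₀ < 1 := lt_of_le_of_ne (le_trans hxS0 (hsumle S₀)) hne1
      have hj : ∃ j ∈ S₀, 0 < x j := by
        by_contra h
        push_neg at h
        have := Finset.sum_nonpos h
        linarith
      obtain ⟨j, hjS, hxj⟩ := hj
      have hcompl : ∑ i ∈ S₀ᶜ, x i = 1 - v S₀ := by
        have := Finset.sum_add_sum_compl S₀ x
        rw [hx2, hN] at this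
        linarith
      have hk : ∃ k ∈ S₀ᶜ, 0 < x k := by
        by_contra h
        push_neg at h
        have := Finset.sum_nonpos h
        rw [hcompl] at this
        linarith
      obtain ⟨k, hkC, hxk⟩ := hk
      have hkS : k ∉ S₀ := Finset.mem_compl.mp hkC
      have hjk : j ≠ k := fun h => hkS (h ▸ hjS)
      set d : Fin n → ℝ := fun i => if i = j then (1:ℝ) else if i = k then -1 else 0 with hd_def
      have hd : ∀ S : Finset (Fin n), ∑ i ∈ S, d i
          = (if j ∈ S then (1:ℝ) else 0) + (if k ∈ S then (-1:ℝ) else 0) := by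
        intro S
        have hsplit : ∀ i, d i = (if i = j then (1:ℝ) else 0) + (if i = k then (-1:ℝ) else 0) := by
          intro i
          rcases eq_or_ne i j with rfl | h1
          · simp [hd_def, hjk]
          · rcases eq_or_ne i k with rfl | h2
            · simp [hd_def, h1]
            · simp [hd_def, h1, h2]
        rw [Finset.sum_congr rfl (fun i _ => hsplit i), Finset.sum_add_distrib,
          Finset.sum_ite_eq' S j (fun _ => (1:ℝ)), Finset.sum_ite_eq' S k (fun _ => (-1:ℝ))]
      have hD1 : ∀ S : Finset (Fin n), -1 ≤ ∑ i ∈ S, d i := by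
        intro S; rw [hd]; split_ifs <;> norm_num
      have hD1' : ∀ S : Finset (Fin n), ∑ i ∈ S, d i ≤ 1 := by
        intro S; rw [hd]; split_ifs <;> norm_num
      have hDuniv : ∑ i, d i = 0 := by
        rw [hd]
        simp [Finset.mem_univ]
      have hD0 : ∀ S : Finset (Fin n), ∑ i ∈ S, x i = v S → v S = 0 → ∑ i ∈ S, d i = 0 := by
        intro S hSx hSv
        have hz : ∀ i ∈ S, x i = 0 :=
          (Finset.sum_eq_zero_iff_of_nonneg (fun i _ => hxnn i)).mp (hSx.trans hSv)
        have hjS' : j ∉ S := fun h => by have := hz j h; linarith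
        have hkS' : k ∉ S := fun h => by have := hz k h; linarith
        rw [hd, if_neg hjS', if_neg hkS', add_zero]
      set g : Finset (Fin n) → ℝ := fun S =>
        if ∑ i ∈ S, x i = v S then (if v S = 0 then 1 else v S) else ∑ i ∈ S, x i - v S
        with hg_def
      have hne' : (Finset.univ : Finset (Finset (Fin n))).Nonempty :=
        ⟨∅, Finset.mem_univ ∅⟩
      set t : ℝ := Finset.univ.inf' hne' g with ht_def
      have ht : 0 < t := by
        rw [ht_def, Finset.lt_inf'_iff]
        intro S _
        rw [hg_def]
        by_cases hc : ∑ i ∈ S, x i = v S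
        · by_cases hz : v S = 0
          · simp [hc, hz]
          · simp only [hc, hz, if_true, if_false]
            exact (hpos S).lt_of_ne (Ne.symm hz)
        · simp only [hc, if_false]
          have := hx1 S
          have hne'' : v S ≠ ∑ i ∈ S, x i := fun h => hc h.symm
          have : v S < ∑ i ∈ S, x i := lt_of_le_of_ne (hx1 S) hne''
          linarith
      have htg : ∀ S : Finset (Fin n), t ≤ g S := fun S =>
        Finset.inf'_le g (Finset.mem_univ S)
      have ht1 : ∀ S : Finset (Fin n), ∑ i ∈ S, x i = v S → v S ≠ 0 → t ≤ v S := by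
        intro S hc hz
        have := htg S
        rw [hg_def] at this
        simpa [hc, hz] using this
      have ht2 : ∀ S : Finset (Fin n), ∑ i ∈ S, x i ≠ v S → t ≤ ∑ i ∈ S, x i - v S := by
        intro S hc
        have := htg S
        rw [hg_def] at this
        simpa [hc] using this
      have hnegsum : ∀ S : Finset (Fin n), ∑ i ∈ S, (fun i => -d i) i = -∑ i ∈ S, d i := by
        intro S; simp
      have hmem'' := perturb_mem v h0 hpos hN x hx1 hx2 (fun i => -d i) t ht
        (by rw [hnegsum, hDuniv]; ring)
        (by intro S; rw [hnegsum]; linarith [hD1' S])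
        (by intro S h1 h2; rw [hnegsum, hD0 S h1 h2]; ring)
        ht1 ht2
      have hmem' := perturb_mem v h0 hpos hN x hx1 hx2 d t ht hDuniv hD1 hD0 ht1 ht2
      have htight0 : ∑ i ∈ S₀, x i = v S₀ := heq.symm
      have hDS0 : ∑ i ∈ S₀, d i = 1 := by
        rw [hd, if_pos hjS, if_neg hkS]; ring
      refine ⟨_, _, hmem', hmem'', ?_, ?_⟩
      · intro hcontra
        have h := congrFun hcontra S₀
        rw [if_pos htight0, if_pos htight0, hDS0, hnegsum S₀, hDS0] at h
        linarith
      · funext S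
        simp only [Pi.smul_apply, Pi.add_apply, smul_eq_mul]
        rw [hnegsum S]
        by_cases hc : ∑ i ∈ S, x i = v S
        · rw [if_pos hc, if_pos hc]; ring
        · rw [if_neg hc, if_neg hc]; ring
  · rintro ⟨hcore, h01⟩
    refine ⟨⟨h0, hpos, hN, hcore⟩, ?_⟩
    rintro ⟨v', v'', hm', hm'', hne, heq⟩
    apply hne
    have hle1 : ∀ (w : Finset (Fin n) → ℝ), w ∈ BGplus n → ∀ S, w S ≤ 1 := by
      rintro w ⟨w0, wpos, wN, y, hy1, hy2⟩ S
      have hynn : ∀ i, 0 ≤ y i := fun i => le_trans (wpos {i}) (by simpa using hy1 {i})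
      calc w S ≤ ∑ i ∈ S, y i := hy1 S
        _ ≤ ∑ i, y i :=
            Finset.sum_le_sum_of_subset_of_nonneg (Finset.subset_univ S)
              (fun i _ _ => hynn i)
        _ = 1 := by rw [hy2, wN]
    funext S
    have hv : v S = (1/2 : ℝ) * (v' S + v'' S) := by
      have := congrFun heq S
      simpa using this
    rcases h01 S with hz | ho
    · have h1 := (hm'.2.1) S
      have h2 := (hm''.2.1) S
      rw [hz] at hv
      linarith
    · have h1 := hle1 v' hm' S
      have h2 := hle1 v'' hm'' S
      rw [ho] at hv
      linarith
end

section
/- Let f_n denote the number of nonempty families D of subsets of 2^N\{∅,N} (|N|=n) whose intersection ⋂D is nonempty. Then f_1 = 0 and f_n = Σ_{k=1}^{n−1} C(n,k)·(2^(2^k − 1) − f_k − 1) for n > 1. -/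
/-!
Taking complements turns a family with a common point that avoids `∅` and `N` into a nonempty
family of nonempty sets whose union `U` is a proper subset of `N`, and back. Sorting these families
by their union, those with union `U` are counted by `g_{|U|}` (`coverCount`), the number of
nonempty families of nonempty sets covering a `|U|`-set, so `f_n = ∑_{k<n} C(n,k) g_k` with
`g_0 = 0`. On the other hand, of the `2^(2^k - 1) - 1` nonempty families of nonempty subsets of a
`k`-set, `g_k` cover it and, by the complement correspondence, `f_k` do not.
-/

open Finset

/-- `fval n` is the number of nonempty families `D` of subsets of `2^N \ {∅, N}`
(`|N| = n`) whose intersection is nonempty. -/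
def fval (n : ℕ) : ℕ :=
  (Finset.univ.filter (fun D : Finset (Finset (Fin n)) =>
    D.Nonempty ∧ (∀ S ∈ D, S ≠ ∅ ∧ S ≠ Finset.univ) ∧
      ∃ i : Fin n, ∀ S ∈ D, i ∈ S)).card

theorem sup_map_mapEmbedding {α β : Type*} [DecidableEq α] [DecidableEq β] (e : β ↪ α)
    (E : Finset (Finset β)) :
    (E.map (mapEmbedding e).toEmbedding).sup id = (E.sup id).map e := by
  rw [sup_map]
  exact (apply_sup_eq_sup_comp (map e) (fun _ _ => map_union _ _) (map_empty e)).symm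

section Families

variable {α β : Type*} [Fintype α] [DecidableEq α] [Fintype β] [DecidableEq β]

def familiesWithUnion (U : Finset α) : Finset (Finset (Finset α)) :=
  {E | E.Nonempty ∧ ∅ ∉ E ∧ E.sup id = U}

theorem map_mem_familiesWithUnion_map_iff (e : β ↪ α) (E : Finset (Finset β)) (U : Finset β) :
    E.map (mapEmbedding e).toEmbedding ∈ familiesWithUnion (U.map e) ↔
      E ∈ familiesWithUnion U := by
  simp only [familiesWithUnion, mem_filter, mem_univ, true_and, sup_map_mapEmbedding,
    map_nonempty]
  simp

theorem card_familiesWithUnion_univ_map (e : β ↪ α) :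
    #(familiesWithUnion (univ.map e)) = #(familiesWithUnion (univ : Finset β)) := by
  symm
  refine card_nbij (·.map (mapEmbedding e).toEmbedding)
    (fun E hE => (map_mem_familiesWithUnion_map_iff e E univ).2 hE)
    (fun E _ F _ h => map_injective _ h) (fun F hF => ?_)
  have hF_range : F ⊆ (univ : Finset (Finset β)).map (mapEmbedding e).toEmbedding := by
    intro S hS
    have hS_range : S ⊆ univ.map e := by
      rw [← (mem_filter.1 hF).2.2.2]
      exact le_sup (f := id) hS
    obtain ⟨T, -, rfl⟩ := subset_map_iff.1 hS_range
    exact mem_map_of_mem _ (mem_univ T)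
  obtain ⟨E, -, rfl⟩ := subset_map_iff.1 hF_range
  exact ⟨E, (map_mem_familiesWithUnion_map_iff e E univ).1 hF, rfl⟩

theorem card_familiesWithUnion (U : Finset α) :
    #(familiesWithUnion U) = #(familiesWithUnion (univ : Finset (Fin #U))) := by
  let e : Fin #U ↪ α := U.equivFin.symm.toEmbedding.trans (.subtype (· ∈ U))
  have hU : univ.map e = U := by
    rw [← map_map, map_univ_equiv, univ_eq_attach, attach_map_val]
  rw [← card_familiesWithUnion_univ_map e, hU]

theorem card_nonempty_families_of_nonempty_sets :
    #{E : Finset (Finset α) | E.Nonempty ∧ ∅ ∉ E} = 2 ^ (2 ^ Fintype.card α - 1) - 1 := by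
  have h : ({E | E.Nonempty ∧ ∅ ∉ E} : Finset (Finset (Finset α))) =
      ((univ : Finset (Finset α)).erase ∅).powerset.erase ∅ := by
    ext E
    simp [subset_iff, nonempty_iff_ne_empty, and_comm]
  rw [h, card_erase_of_mem (empty_mem_powerset _), card_powerset,
    card_erase_of_mem (mem_univ _), card_univ, Fintype.card_finset]

theorem card_nonempty_families_of_nonempty_sets_sup_mem (t : Finset (Finset α)) :
    #{E : Finset (Finset α) | E.Nonempty ∧ ∅ ∉ E ∧ E.sup id ∈ t} =
      ∑ U ∈ t, #(familiesWithUnion U) := by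
  rw [card_eq_sum_card_fiberwise (f := (·.sup id)) (fun E hE => (mem_filter.1 hE).2.2.2)]
  refine sum_congr rfl fun U hU => congrArg card ?_
  ext E
  simp only [familiesWithUnion, mem_filter, mem_univ, true_and]
  constructor
  · rintro ⟨⟨hne, h0, -⟩, rfl⟩
    exact ⟨hne, h0, rfl⟩
  · rintro ⟨hne, h0, rfl⟩
    exact ⟨⟨hne, h0, hU⟩, rfl⟩

theorem exists_forall_mem_iff_sup_image_compl_ne_univ (D : Finset (Finset α)) :
    (∃ i, ∀ S ∈ D, i ∈ S) ↔ (D.image compl).sup id ≠ univ := by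
  rw [sup_image, Function.id_comp, Ne, eq_univ_iff_forall]
  simp [mem_sup]

theorem intersecting_iff_image_compl (D : Finset (Finset α)) :
    (D.Nonempty ∧ (∀ S ∈ D, S ≠ ∅ ∧ S ≠ univ) ∧ ∃ i, ∀ S ∈ D, i ∈ S) ↔
      (D.image compl).Nonempty ∧ ∅ ∉ D.image compl ∧ (D.image compl).sup id ∈ univ.erase univ := by
  rw [mem_erase, ← exists_forall_mem_iff_sup_image_compl_ne_univ, image_nonempty]
  simp only [mem_image, compl_eq_empty_iff, exists_eq_right, mem_univ, and_true]
  constructor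
  · rintro ⟨hne, hD, hi⟩
    exact ⟨hne, fun h => (hD univ h).2 rfl, hi⟩
  · rintro ⟨hne, huniv, i, hi⟩
    exact ⟨hne, fun S hS => ⟨ne_empty_of_mem (hi S hS), ne_of_mem_of_not_mem hS huniv⟩, i, hi⟩

end Families

def coverCount (n : ℕ) : ℕ := #(familiesWithUnion (univ : Finset (Fin n)))

theorem coverCount_zero : coverCount 0 = 0 := by decide

theorem fval_eq_card_sup_ne_univ (n : ℕ) :
    fval n = #{E : Finset (Finset (Fin n)) | E.Nonempty ∧ ∅ ∉ E ∧ E.sup id ∈ univ.erase univ} := by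
  have image_compl_involutive (D : Finset (Finset (Fin n))) : (D.image compl).image compl = D := by
    rw [image_image, compl_comp_compl, image_id]
  refine card_nbij' (·.image compl) (·.image compl) (fun D hD => ?_) (fun E hE => ?_)
    (fun D _ => image_compl_involutive D) (fun E _ => image_compl_involutive E)
  · simpa using (intersecting_iff_image_compl D).1 (mem_filter.1 hD).2
  · simpa [intersecting_iff_image_compl, image_compl_involutive] using hE

theorem fval_eq_sum_card_familiesWithUnion (n : ℕ) :
    fval n = ∑ U ∈ (univ : Finset (Finset (Fin n))).erase univ, #(familiesWithUnion U) := by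
  rw [fval_eq_card_sup_ne_univ, card_nonempty_families_of_nonempty_sets_sup_mem]

theorem coverCount_add_fval_add_one (n : ℕ) : coverCount n + fval n + 1 = 2 ^ (2 ^ n - 1) := by
  have h := card_nonempty_families_of_nonempty_sets_sup_mem (univ : Finset (Finset (Fin n)))
  simp only [mem_univ, and_true, card_nonempty_families_of_nonempty_sets, Fintype.card_fin] at h
  rw [← sum_erase_add _ _ (mem_univ univ), ← fval_eq_sum_card_familiesWithUnion] at h
  have : 1 ≤ 2 ^ (2 ^ n - 1) := Nat.one_le_two_pow
  rw [coverCount]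
  omega

theorem fval_eq_sum_choose_mul_coverCount (n : ℕ) :
    fval n = ∑ k ∈ range n, n.choose k * coverCount k := by
  have h := sum_powerset_apply_card coverCount (x := (univ : Finset (Fin n)))
  rw [powerset_univ, ← sum_erase_add _ _ (mem_univ univ), card_univ, Fintype.card_fin,
    sum_range_succ, Nat.choose_self, one_smul] at h
  simp only [smul_eq_mul] at h
  rw [fval_eq_sum_card_familiesWithUnion, sum_congr rfl fun U _ => card_familiesWithUnion U]
  exact Nat.add_right_cancel h

/-- Recursion: `f_1 = 0` and
`f_n = Σ_{k=1}^{n-1} C(n,k) (2^(2^k - 1) - f_k - 1)` for `n > 1`. -/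
theorem fval_recursion :
    fval 1 = 0 ∧
    ∀ n : ℕ, 1 < n →
      fval n = ∑ k ∈ Finset.Ico 1 n,
        n.choose k * (2 ^ (2 ^ k - 1) - fval k - 1) := by
  refine ⟨by rw [fval_eq_sum_choose_mul_coverCount, sum_range_one, coverCount_zero, mul_zero],
    fun n hn => ?_⟩
  rw [fval_eq_sum_choose_mul_coverCount, range_eq_Ico, sum_eq_sum_Ico_succ_bot (by omega),
    coverCount_zero, mul_zero, zero_add]
  refine sum_congr rfl fun k _ => ?_
  rw [Nat.sub_sub, ← coverCount_add_fval_add_one k, add_assoc, Nat.add_sub_cancel]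
end

section
/- The asymptotic growth of the number b_n of vertices of BG_+(n) satisfies b_n = O(n · 2^(2^(n−1))). -/
open Finset

/-- The number of vertices of `BG_+(n)`. -/
def bval (n : ℕ) : ℕ := fval n + 1

/-! A family with a common element `a` is a subfamily of the star `{S | a ∈ S}`, which has
`2^(n-1)` members; a union bound over `a` gives `f_n ≤ n · 2^(2^(n-1))`, and the extra `+ 1`
in `b_n` is absorbed by doubling the constant. -/

section CommonElement

variable {α : Type*} [Fintype α] [DecidableEq α]

theorem card_filter_mem_univ (a : α) :
    #{S : Finset α | a ∈ S} = 2 ^ (Fintype.card α - 1) := by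
  have h_bij : #{S : Finset α | a ∈ S} = #(univ.erase a).powerset :=
    card_nbij' (·.erase a) (insert a)
      (fun S _ => by simp)
      (fun S _ => by simp)
      (fun S hS => insert_erase (by simpa using hS))
      (fun S hS => erase_insert fun ha => by simpa using mem_powerset.mp hS ha)
  rw [h_bij, card_powerset, card_erase_of_mem (mem_univ a), card_univ]

theorem card_filter_exists_forall_mem_le :
    #{D : Finset (Finset α) | ∃ a, ∀ S ∈ D, a ∈ S}
      ≤ Fintype.card α * 2 ^ 2 ^ (Fintype.card α - 1) := by
  have h_cover : ({D : Finset (Finset α) | ∃ a, ∀ S ∈ D, a ∈ S} : Finset _)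
      ⊆ univ.biUnion fun a : α => ({S : Finset α | a ∈ S} : Finset _).powerset := by
    intro D hD
    obtain ⟨a, ha⟩ := (mem_filter.mp hD).2
    exact mem_biUnion.mpr ⟨a, mem_univ a, mem_powerset.mpr fun S hS => by simpa using ha S hS⟩
  calc _ ≤ _ := card_le_card h_cover
    _ ≤ ∑ a : α, #({S : Finset α | a ∈ S} : Finset _).powerset := card_biUnion_le
    _ = _ := by simp [card_filter_mem_univ]

end CommonElement

theorem fval_le (n : ℕ) : fval n ≤ n * 2 ^ 2 ^ (n - 1) := by
  have h := card_filter_exists_forall_mem_le (α := Fin n)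
  rw [Fintype.card_fin] at h
  refine (card_le_card fun D hD => ?_).trans h
  simp only [mem_filter, mem_univ, true_and] at hD ⊢
  exact hD.2.2

/-- `b_n = O(n · 2^(2^(n-1)))`. -/
theorem bval_bigO :
    ∃ C n₀ : ℕ, ∀ n ≥ n₀, bval n ≤ C * (n * 2 ^ (2 ^ (n - 1))) := by
  refine ⟨2, 1, fun n hn => ?_⟩
  have h_pos : 1 ≤ n * 2 ^ 2 ^ (n - 1) := Nat.one_le_iff_ne_zero.mpr (by positivity)
  calc bval n = fval n + 1 := rfl
    _ ≤ n * 2 ^ 2 ^ (n - 1) + n * 2 ^ 2 ^ (n - 1) := Nat.add_le_add (fval_le n) h_pos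
    _ = 2 * (n * 2 ^ 2 ^ (n - 1)) := by ring
end

section
/- Let v1, v2, v3 be 0-1-valued games that are vertices of BG_+(n) (i.e., each is 0-1-valued, v_j(N)=1, and the family of sets where v_j equals 1, excluding N, has nonempty intersection or is empty), and suppose v1 ≤ v2 ≤ v3 pointwise. Then v1 + v3 − v2 is also a vertex of BG_+(n). -/
open Finset

/-- A vertex of `BG_+(n)`: a 0-1 game `v` with `v(∅)=0`, `v(N)=1`, such that the family
`{S ≠ ∅, N : v(S)=1}` is empty or has nonempty intersection. -/
def IsVertexBGplus {n : ℕ} (v : Finset (Fin n) → ℝ) : Prop :=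
  v ∅ = 0 ∧ v Finset.univ = 1 ∧ (∀ S, v S = 0 ∨ v S = 1) ∧
    ((∀ S : Finset (Fin n), S ≠ Finset.univ → v S = 0) ∨
      ∃ i : Fin n, ∀ S : Finset (Fin n), S ≠ Finset.univ → v S = 1 → i ∈ S)

/-- Property B: if `v1 ≤ v2 ≤ v3` are vertices of `BG_+(n)`,
then `v1 + v3 - v2` is also a vertex. -/
theorem propertyB {n : ℕ} (v1 v2 v3 : Finset (Fin n) → ℝ)
    (h1 : IsVertexBGplus v1) (h2 : IsVertexBGplus v2) (h3 : IsVertexBGplus v3)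
    (h12 : v1 ≤ v2) (h23 : v2 ≤ v3) :
    IsVertexBGplus (v1 + v3 - v2) := by
  obtain ⟨e1, u1, b1, -⟩ := h1
  obtain ⟨e2, u2, b2, -⟩ := h2
  obtain ⟨e3, u3, b3, hcase⟩ := h3
  have key : ∀ S, ((v1 S = 0 ∧ v3 S = 0 ∧ v2 S = 0) ∨
      (v1 S = 0 ∧ v3 S = 1 ∧ v2 S = 0) ∨
      (v1 S = 0 ∧ v3 S = 1 ∧ v2 S = 1) ∨
      (v1 S = 1 ∧ v3 S = 1 ∧ v2 S = 1)) := by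
    intro S
    rcases b1 S with a1 | a1 <;> rcases b2 S with a2 | a2 <;> rcases b3 S with a3 | a3 <;>
      [skip; skip; skip; skip; skip; skip; skip; skip] <;>
      first
        | (exfalso; have := h12 S; have := h23 S; linarith)
        | tauto
  have val : ∀ S, (v1 + v3 - v2) S = v1 S + v3 S - v2 S := fun S => by
    simp [Pi.add_apply, Pi.sub_apply]
  refine ⟨by rw [val]; linarith, by rw [val]; linarith, fun S => by
    rw [val]; rcases key S with ⟨a, b, c⟩ | ⟨a, b, c⟩ | ⟨a, b, c⟩ | ⟨a, b, c⟩ <;>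
      [left; right; left; right] <;> linarith, ?_⟩
  have hw3 : ∀ S, (v1 + v3 - v2) S = 1 → v3 S = 1 := by
    intro S hS
    rw [val] at hS
    rcases key S with ⟨a, b, c⟩ | ⟨a, b, c⟩ | ⟨a, b, c⟩ | ⟨a, b, c⟩ <;> linarith
  rcases hcase with h | ⟨i, hi⟩
  · left
    intro S hS
    rw [val]
    rcases key S with ⟨a, b, c⟩ | ⟨a, b, c⟩ | ⟨a, b, c⟩ | ⟨a, b, c⟩ <;>
      first | linarith | (exact absurd (h S hS) (by linarith))
  · right
    exact ⟨i, fun S hS h1S => hi S hS (hw3 S h1S)⟩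
end

section
/- Let v1, v2 be distinct vertices of BG_+(n) with associated families D1, D2 satisfying ⋂D1 = {i} = ⋂D2. Then v1 and v2 are adjacent (lie on a common edge of BG_+(n)) if and only if D1 ⊆ D2 or D2 ⊆ D1, and the symmetric difference D1 Δ D2 has exactly one element. -/
open Finset

def gameOf {n : ℕ} (D : Finset (Finset (Fin n))) : Finset (Fin n) → ℝ :=
  fun S => if S ∈ D ∨ S = Finset.univ then 1 else 0

/-!
`BG_+(n)` lies in the cube `[0,1]^(2^N)` and contains every 0-1 game `v_D` whose family has a
common player, so these games are vertices. If `D₂ = insert T D₁`, the games on the segment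
`[v_{D₁}, v_{D₂}]` are exactly the points of `BG_+(n)` agreeing with `v_{D₁}` off `T`; since the
prescribed values are 0 or 1, this is a face of the cube cut down to `BG_+(n)`. Conversely, any
family `D` with `D₁ ∩ D₂ ⊆ D ⊆ D₁ ∪ D₂` has a partner `D'` with `v_{D₁} + v_{D₂} = v_D + v_{D'}`,
so for an edge `D` must be `D₁` or `D₂`. Taking `D = D₁ ∪ D₂` forces comparability, and taking
`D = insert T D₁` for `T ∈ D₂ \ D₁` forces `D₂ \ D₁ = {T}`.
-/

open Set in
theorem isExtreme_setOf_forall_apply_eq {𝕜 ι : Type*} {M : ι → Type*} [Semiring 𝕜]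
    [PartialOrder 𝕜] [∀ s, AddCommMonoid (M s)] [∀ s, Module 𝕜 (M s)] {C : ∀ s, Set (M s)}
    {A : Set (∀ s, M s)} (hA : A ⊆ univ.pi C) {x : ∀ s, M s} {P : ι → Prop}
    (hx : ∀ s, P s → x s ∈ (C s).extremePoints 𝕜) :
    IsExtreme 𝕜 A {w ∈ A | ∀ s, P s → w s = x s} := by
  refine ⟨fun w hw => hw.1, fun x₁ hx₁ x₂ hx₂ w ⟨_, hwx⟩ hw => ⟨hx₁, fun s hs => ?_⟩⟩
  have hws : w s ∈ openSegment 𝕜 (x₁ s) (x₂ s) :=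
    Pi.openSegment_subset (s := univ) x₁ x₂ hw s trivial
  rw [hwx s hs] at hws
  exact (hx s hs).2 (hA hx₁ s trivial) (hA hx₂ s trivial) hws

theorem not_isExtreme_segment_of_add_eq {E : Type*} [AddCommGroup E] [Module ℝ E] {A : Set E}
    {x y z w : E} (hx : x ∈ A) (hy : y ∈ A) (hz : z ∈ A.extremePoints ℝ) (hw : w ∈ A)
    (hsum : x + y = z + w) (hzx : z ≠ x) (hzy : z ≠ y) :
    ¬ IsExtreme ℝ A (segment ℝ x y) := by
  intro h
  have hmid : midpoint ℝ x y ∈ openSegment ℝ z w := by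
    rw [midpoint_eq_smul_add, hsum, ← midpoint_eq_smul_add]
    exact midpoint_mem_openSegment z w
  have hz_mem : z ∈ segment ℝ x y :=
    h.left_mem_of_mem_openSegment hz.1 hw (midpoint_mem_segment x y) hmid
  rcases (mem_extremePoints_iff_forall_segment.1 hz).2 x hx y hy hz_mem with rfl | rfl
  exacts [hzx rfl, hzy rfl]

theorem convex_BGplus (n : ℕ) : Convex ℝ (BGplus n) := by
  rintro v ⟨hv0, hv, hvU, x, hxS, hxU⟩ w ⟨hw0, hw, hwU, y, hyS, hyU⟩ a b ha hb hab
  refine ⟨by simp [hv0, hw0], fun S => ?_, by simp [hvU, hwU, hab],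
    a • x + b • y, fun S => ?_, ?_⟩
  · simp only [Pi.add_apply, Pi.smul_apply, smul_eq_mul]
    have := hv S
    have := hw S
    positivity
  · simp only [Pi.add_apply, Pi.smul_apply, smul_eq_mul, sum_add_distrib, ← mul_sum]
    gcongr
    exacts [hxS S, hyS S]
  · simp [sum_add_distrib, ← mul_sum, hxU, hyU]

open unitInterval in
theorem BGplus_subset_pi_unitInterval (n : ℕ) : BGplus n ⊆ Set.univ.pi fun _ => I := by
  rintro w ⟨-, hw, hwU, x, hxS, hxU⟩ S -
  have hx : ∀ j, 0 ≤ x j := fun j => (hw {j}).trans (by simpa using hxS {j})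
  refine ⟨hw S, ?_⟩
  calc w S ≤ ∑ j ∈ S, x j := hxS S
    _ ≤ ∑ j, x j := sum_le_sum_of_subset_of_nonneg (subset_univ S) fun j _ _ => hx j
    _ = 1 := by rw [hxU, hwU]

section gameOf

variable {n : ℕ} {D D₁ D₂ : Finset (Finset (Fin n))} {T : Finset (Fin n)} {i : Fin n}

theorem gameOf_mem_BGplus (hi : ∀ S ∈ D, i ∈ S) : gameOf D ∈ BGplus n := by
  have hempty : ∅ ≠ (univ : Finset (Fin n)) := (univ_nonempty_iff.2 ⟨i⟩).ne_empty.symm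
  refine ⟨by simpa [gameOf, hempty] using fun h => notMem_empty i (hi ∅ h), fun S => ?_,
    by simp [gameOf], Pi.single i 1, fun S => ?_, by simp [gameOf]⟩
  · unfold gameOf
    split_ifs <;> norm_num
  · rw [sum_pi_single']
    unfold gameOf
    split_ifs with hS hiS <;> norm_num
    exact hiS (hS.elim (hi S) fun h => h ▸ mem_univ i)

open unitInterval in
theorem gameOf_apply_mem_extremePoints_unitInterval (D : Finset (Finset (Fin n)))
    (S : Finset (Fin n)) : gameOf D S ∈ Set.extremePoints ℝ I := by
  rw [Set.extremePoints_Icc zero_le_one]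
  unfold gameOf
  split_ifs <;> simp

theorem gameOf_mem_extremePoints_BGplus (hi : ∀ S ∈ D, i ∈ S) :
    gameOf D ∈ (BGplus n).extremePoints ℝ :=
  inter_extremePoints_subset_extremePoints_of_subset (BGplus_subset_pi_unitInterval n)
    ⟨gameOf_mem_BGplus hi, by
      rw [extremePoints_pi]
      exact fun S _ => gameOf_apply_mem_extremePoints_unitInterval D S⟩

theorem gameOf_add_gameOf : gameOf D₁ + gameOf D₂ = gameOf (D₁ ∪ D₂) + gameOf (D₁ ∩ D₂) := by
  funext S
  by_cases h₁ : S ∈ D₁ <;> by_cases h₂ : S ∈ D₂ <;> by_cases hS : S = univ <;>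
    simp [gameOf, h₁, h₂, hS]

theorem eq_of_gameOf_eq (h₁ : univ ∉ D₁) (h₂ : univ ∉ D₂) (h : gameOf D₁ = gameOf D₂) :
    D₁ = D₂ := by
  ext S
  by_cases hS : S = univ
  · subst hS
    simp [h₁, h₂]
  · have hS' := congrFun h S
    by_cases h₁ : S ∈ D₁ <;> by_cases h₂ : S ∈ D₂ <;> simp_all [gameOf]

theorem segment_gameOf_insert (hi : ∀ S ∈ insert T D, i ∈ S) (hT : T ∉ D) (hTU : T ≠ univ) :
    segment ℝ (gameOf D) (gameOf (insert T D)) =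
      {w ∈ BGplus n | ∀ S, S ≠ T → w S = gameOf D S} := by
  have agree : ∀ S, S ≠ T → gameOf (insert T D) S = gameOf D S := by
    intro S hST
    simp [gameOf, hST]
  ext w
  constructor
  · intro hw
    refine ⟨(convex_BGplus n).segment_subset
      (gameOf_mem_BGplus fun S hS => hi S (mem_insert_of_mem hS)) (gameOf_mem_BGplus hi) hw,
      fun S hST => ?_⟩
    obtain ⟨a, b, -, -, hab, rfl⟩ := hw
    simp [agree S hST, ← add_mul, hab]
  · rintro ⟨hw, hwD⟩
    obtain ⟨hw0, hw1⟩ := BGplus_subset_pi_unitInterval n hw T trivial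
    refine ⟨1 - w T, w T, by linarith, hw0, by ring, funext fun S => ?_⟩
    by_cases hST : S = T
    · subst hST
      simp [gameOf, hT, hTU]
    · simp [agree S hST, hwD S hST]
      ring

theorem isExtreme_segment_gameOf_insert (hi : ∀ S ∈ insert T D, i ∈ S) (hT : T ∉ D)
    (hTU : T ≠ univ) : IsExtreme ℝ (BGplus n) (segment ℝ (gameOf D) (gameOf (insert T D))) := by
  rw [segment_gameOf_insert hi hT hTU]
  exact isExtreme_setOf_forall_apply_eq (BGplus_subset_pi_unitInterval n)
    fun S _ => gameOf_apply_mem_extremePoints_unitInterval D S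

theorem eq_or_eq_of_isExtreme_segment_gameOf (hi₁ : ∀ S ∈ D₁, i ∈ S) (hi₂ : ∀ S ∈ D₂, i ∈ S)
    (h : IsExtreme ℝ (BGplus n) (segment ℝ (gameOf D₁) (gameOf D₂)))
    (hD₁₂ : D₁ ∩ D₂ ⊆ D) (hD : D ⊆ D₁ ∪ D₂) (hU : univ ∉ D₁ ∪ D₂) :
    D = D₁ ∨ D = D₂ := by
  by_contra! hD_ne
  have hi : ∀ S ∈ D₁ ∪ D₂, i ∈ S := by
    intro S hS
    rcases mem_union.1 hS with h | h
    exacts [hi₁ S h, hi₂ S h]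
  -- `D'` is the family with `D ∪ D' = D₁ ∪ D₂` and `D ∩ D' = D₁ ∩ D₂`.
  set D' := D₁ ∩ D₂ ∪ (D₁ ∪ D₂) \ D
  have hsum : gameOf D₁ + gameOf D₂ = gameOf D + gameOf D' := by
    have hunion : D ∪ D' = D₁ ∪ D₂ := by grind
    have hinter : D ∩ D' = D₁ ∩ D₂ := by grind
    rw [gameOf_add_gameOf, gameOf_add_gameOf (D₁ := D), hunion, hinter]
  refine not_isExtreme_segment_of_add_eq (gameOf_mem_BGplus hi₁) (gameOf_mem_BGplus hi₂)
    (gameOf_mem_extremePoints_BGplus fun S hS => hi S (hD hS))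
    (gameOf_mem_BGplus fun S hS => hi S (by grind)) hsum ?_ ?_ h
  · exact fun h => hD_ne.1 (eq_of_gameOf_eq (fun h => hU (hD h)) (fun h => hU (by grind)) h)
  · exact fun h => hD_ne.2 (eq_of_gameOf_eq (fun h => hU (hD h)) (fun h => hU (by grind)) h)

theorem isExtreme_segment_gameOf_iff_of_ssubset (hi : ∀ S ∈ D₂, i ∈ S) (hU : univ ∉ D₂)
    (hD : D₁ ⊂ D₂) :
    IsExtreme ℝ (BGplus n) (segment ℝ (gameOf D₁) (gameOf D₂)) ↔ (D₂ \ D₁).card = 1 := by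
  have hU₁₂ : univ ∉ D₁ ∪ D₂ := by rwa [union_eq_right.2 hD.subset]
  constructor
  · intro h
    obtain ⟨T, hT⟩ := sdiff_nonempty.2 (not_subset_of_ssubset hD)
    obtain ⟨hT₂, hT₁⟩ := mem_sdiff.1 hT
    rcases eq_or_eq_of_isExtreme_segment_gameOf (fun S hS => hi S (hD.subset hS)) hi h
      (inter_subset_left.trans (subset_insert T D₁))
      (insert_subset (mem_union_right _ hT₂) subset_union_left) hU₁₂ with h₁ | h₂
    · exact absurd (insert_eq_self.1 h₁) hT₁
    · simp [← h₂, hT₁]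
  · intro h
    obtain ⟨T, hT⟩ := card_eq_one.1 h
    have hT₁ : T ∉ D₁ := (mem_sdiff.1 (hT ▸ mem_singleton_self T)).2
    have hD₂ : D₂ = insert T D₁ := by
      rw [← union_sdiff_of_subset hD.subset, hT, union_comm, insert_eq]
    subst hD₂
    exact isExtreme_segment_gameOf_insert hi hT₁ fun h => hU (h ▸ mem_insert_self T D₁)

end gameOf

theorem adjacent_iff_same_singleton_intersection_general {n : ℕ}
    (D1 D2 : Finset (Finset (Fin n)))
    (h1U : Finset.univ ∉ D1)
    (h2U : Finset.univ ∉ D2)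
    (i : Fin n)
    (hi1 : Finset.univ.filter (fun j : Fin n => ∀ S ∈ D1, j ∈ S) = {i})
    (hi2 : Finset.univ.filter (fun j : Fin n => ∀ S ∈ D2, j ∈ S) = {i})
    (hne : gameOf D1 ≠ gameOf D2) :
    IsExtreme ℝ (BGplus n) (segment ℝ (gameOf D1) (gameOf D2)) ↔
      ((D1 ⊆ D2 ∨ D2 ⊆ D1) ∧ ((D1 \ D2) ∪ (D2 \ D1)).card = 1) := by
  have hiD1 : ∀ S ∈ D1, i ∈ S := (mem_filter.1 (hi1 ▸ mem_singleton_self i)).2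
  have hiD2 : ∀ S ∈ D2, i ∈ S := (mem_filter.1 (hi2 ▸ mem_singleton_self i)).2
  have hD : D1 ≠ D2 := fun h => hne (h ▸ rfl)
  by_cases hcomp : D1 ⊆ D2 ∨ D2 ⊆ D1
  · rcases hcomp with hsub | hsub
    · rw [sdiff_eq_empty_iff_subset.2 hsub, empty_union,
        isExtreme_segment_gameOf_iff_of_ssubset hiD2 h2U (ssubset_of_subset_of_ne hsub hD)]
      simp [hsub]
    · rw [sdiff_eq_empty_iff_subset.2 hsub, union_empty, segment_symm,
        isExtreme_segment_gameOf_iff_of_ssubset hiD1 h1U (ssubset_of_subset_of_ne hsub hD.symm)]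
      simp [hsub]
  · refine iff_of_false (fun h => hcomp ?_) (fun h => hcomp h.1)
    rcases eq_or_eq_of_isExtreme_segment_gameOf hiD1 hiD2 h inter_subset_union subset_rfl
      (by simp [h1U, h2U]) with h₁ | h₂
    exacts [Or.inr (union_eq_left.1 h₁), Or.inl (union_eq_right.1 h₂)]

/-- Two distinct vertices `v_{D1}`, `v_{D2}` with `⋂D1 = {i} = ⋂D2` are adjacent
(i.e. the segment joining them is a face of `BG_+(n)`) iff `D1 ⊆ D2` or `D2 ⊆ D1`
and `|D1 Δ D2| = 1`. -/
theorem adjacent_iff_same_singleton_intersection {n : ℕ}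
    (D1 D2 : Finset (Finset (Fin n)))
    (h1emp : ∅ ∉ D1) (h1U : Finset.univ ∉ D1)
    (h2emp : ∅ ∉ D2) (h2U : Finset.univ ∉ D2)
    (i : Fin n)
    (hi1 : Finset.univ.filter (fun j : Fin n => ∀ S ∈ D1, j ∈ S) = {i})
    (hi2 : Finset.univ.filter (fun j : Fin n => ∀ S ∈ D2, j ∈ S) = {i})
    (hne : gameOf D1 ≠ gameOf D2) :
    IsExtreme ℝ (BGplus n) (segment ℝ (gameOf D1) (gameOf D2)) ↔
      ((D1 ⊆ D2 ∨ D2 ⊆ D1) ∧ ((D1 \ D2) ∪ (D2 \ D1)).card = 1) :=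
  adjacent_iff_same_singleton_intersection_general D1 D2 h1U h2U i hi1 hi2 hne
end

section
/- Let v1, v2 be adjacent vertices of BG_+(n) with families D1, D2 satisfying ⋂D1 = {i} = ⋂D2, and let v = λ v1 + (1−λ) v2 for λ ∈ (0,1). Then the core of v is a singleton. -/
open Finset

/-- If `v1, v2` are adjacent vertices of `BG_+(n)` with `⋂D1 = {i} = ⋂D2`
(adjacency here means `D1 ⊆ D2` or `D2 ⊆ D1` with `|D1 Δ D2| = 1`), then for
`λ ∈ (0,1)` the game `λ v1 + (1-λ) v2` has a core reduced to a singleton. -/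
theorem core_singleton_on_edge {n : ℕ} (D1 D2 : Finset (Finset (Fin n)))
    (h1emp : ∅ ∉ D1) (h1U : Finset.univ ∉ D1)
    (h2emp : ∅ ∉ D2) (h2U : Finset.univ ∉ D2)
    (i : Fin n)
    (hi1 : Finset.univ.filter (fun j : Fin n => ∀ S ∈ D1, j ∈ S) = {i})
    (hi2 : Finset.univ.filter (fun j : Fin n => ∀ S ∈ D2, j ∈ S) = {i})
    (hadj : (D1 ⊆ D2 ∨ D2 ⊆ D1) ∧ ((D1 \ D2) ∪ (D2 \ D1)).card = 1)
    (lam : ℝ) (hlam0 : 0 < lam) (hlam1 : lam < 1) :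
    ∃ x : Fin n → ℝ,
      core (lam • gameOf D1 + (1 - lam) • gameOf D2) = {x} := by
  set v := lam • gameOf D1 + (1 - lam) • gameOf D2 with hv
  have hvS : ∀ S : Finset (Fin n), v S =
      lam * (if S ∈ D1 ∨ S = Finset.univ then 1 else 0)
      + (1 - lam) * (if S ∈ D2 ∨ S = Finset.univ then 1 else 0) := fun S => rfl
  have hmem1 : ∀ j : Fin n, (∀ S ∈ D1, j ∈ S) ↔ j = i := by
    intro j
    rw [← Finset.mem_singleton, ← hi1, Finset.mem_filter]
    simp
  have hmem2 : ∀ j : Fin n, (∀ S ∈ D2, j ∈ S) ↔ j = i := by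
    intro j
    rw [← Finset.mem_singleton, ← hi2, Finset.mem_filter]
    simp
  have hvU : v Finset.univ = 1 := by
    rw [hvS]
    simp only [or_true, if_true]; ring
  have hv0 : ∀ S, 0 ≤ v S := by
    intro S; rw [hvS]; split_ifs <;> nlinarith
  have hv1 : ∀ S, v S ≤ 1 := by
    intro S; rw [hvS]; split_ifs <;> nlinarith
  have hvone : ∀ S, S ∈ D1 → S ∈ D2 → v S = 1 := by
    intro S hS1 hS2; rw [hvS]
    rw [if_pos (Or.inl hS1), if_pos (Or.inl hS2)]; ring
  have hvzero : ∀ S : Finset (Fin n), i ∉ S → v S = 0 := by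
    intro S hiS
    have hS1 : S ∉ D1 := fun h => hiS ((hmem1 i).mpr rfl S h)
    have hS2 : S ∉ D2 := fun h => hiS ((hmem2 i).mpr rfl S h)
    have hSU : S ≠ Finset.univ := by rintro rfl; exact hiS (Finset.mem_univ i)
    rw [hvS, if_neg (by tauto), if_neg (by tauto)]; ring
  refine ⟨fun j => if j = i then (1:ℝ) else 0, ?_⟩
  have hxsum : ∀ S : Finset (Fin n),
      (∑ j ∈ S, if j = i then (1:ℝ) else 0) = if i ∈ S then 1 else 0 := by
    intro S; rw [Finset.sum_ite_eq' S i (fun _ => (1:ℝ))]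
  rw [Set.eq_singleton_iff_unique_mem]
  constructor
  · constructor
    · intro S
      rw [hxsum]
      by_cases hiS : i ∈ S
      · rw [if_pos hiS]; exact hv1 S
      · rw [if_neg hiS, hvzero S hiS]
    · rw [hxsum, if_pos (Finset.mem_univ i), hvU]
  · rintro y ⟨hge, hsum⟩
    rw [hvU] at hsum
    have hnn : ∀ k, 0 ≤ y k := by
      intro k
      have := hge {k}
      rw [Finset.sum_singleton] at this
      exact le_trans (hv0 {k}) this
    have hzero : ∀ j, j ≠ i → y j = 0 := by
      intro j hj
      -- find S in both D1 and D2 with j ∉ S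
      have hex : ∃ S, S ∈ D1 ∧ S ∈ D2 ∧ j ∉ S := by
        rcases hadj.1 with hsub | hsub
        · have : ¬ (∀ S ∈ D1, j ∈ S) := fun h => hj ((hmem1 j).mp h)
          push_neg at this
          obtain ⟨S, hS, hjS⟩ := this
          exact ⟨S, hS, hsub hS, hjS⟩
        · have : ¬ (∀ S ∈ D2, j ∈ S) := fun h => hj ((hmem2 j).mp h)
          push_neg at this
          obtain ⟨S, hS, hjS⟩ := this
          exact ⟨S, hsub hS, hS, hjS⟩
      obtain ⟨S, hS1, hS2, hjS⟩ := hex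
      have h1 : (1:ℝ) ≤ ∑ k ∈ S, y k := by
        have := hge S; rwa [hvone S hS1 hS2] at this
      have hsplit : ∑ k ∈ S, y k + ∑ k ∈ Sᶜ, y k = 1 := by
        rw [Finset.sum_add_sum_compl]; exact hsum
      have hyle : y j ≤ ∑ k ∈ Sᶜ, y k :=
        Finset.single_le_sum (fun k _ => hnn k) (Finset.mem_compl.mpr hjS)
      have : y j ≤ 0 := by linarith
      exact le_antisymm this (hnn j)
    funext j
    by_cases hji : j = i
    · subst hji
      rw [if_pos rfl]
      have : ∑ k, y k = y j := by
        apply Finset.sum_eq_single_of_mem j (Finset.mem_univ j)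
        intro b _ hb
        exact hzero b hb
      linarith [hsum, this]
    · rw [if_neg hji]; exact hzero j hji
end
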